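/- arXiv:2002.11614 — 3 statements merged into one kernel-verified Lean document; each statement's English description precedes it below -/
import Mathlib

section
/- If v ∈ RG satisfies v = v^T and v² = 0, then the row space of σ(v) over R is a self-orthogonal code: any two rows of σ(v) have Euclidean inner product zero. -/
/-- The matrix σ(v) of a group ring element, with (i,j) entry the coefficient of i⁻¹ * j. -/
noncomputable def sigmaMat {R G : Type*} [Semiring R] [Group G] (v : MonoidAlgebra R G) :
    Matrix G G R := Matrix.of fun i j => v.coeff (i⁻¹ * j)

/-- The canonical involution on a group ring, sending Σ αᵢ gᵢ to Σ αᵢ gᵢ⁻¹. -/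
noncomputable def transInvol {R G : Type*} [Semiring R] [Group G] (v : MonoidAlgebra R G) :
    MonoidAlgebra R G := MonoidAlgebra.ofCoeff (Finsupp.equivMapDomain (Equiv.inv G) v.coeff)

/-!
The map `σ` is a ring homomorphism from `RG` to matrices, and it turns the involution `vᵀ`
into the matrix transpose. Hence `σ(v) σ(v)ᵀ = σ(v) σ(vᵀ) = σ(v²) = 0`, i.e. the rows of `σ(v)`
are pairwise orthogonal, and orthogonality passes to their span.
-/

open Matrix

theorem Matrix.dotProduct_eq_zero_of_mem_span_row {R m n : Type*} [CommSemiring R]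
    [Fintype m] [Fintype n] {A : Matrix m n R} (hA : A * Aᵀ = 0) {x y : n → R}
    (hx : x ∈ Submodule.span R (Set.range A.row)) (hy : y ∈ Submodule.span R (Set.range A.row)) :
    x ⬝ᵥ y = 0 := by
  rw [← range_vecMulLinear] at hx hy
  obtain ⟨a, rfl⟩ := hx
  obtain ⟨b, rfl⟩ := hy
  simp only [vecMulLinear_apply]
  rw [← mulVec_transpose A b, dotProduct_mulVec, vecMul_vecMul, hA, vecMul_zero, zero_dotProduct]

namespace MonoidAlgebra

theorem coeff_mul_eq_sum {R G : Type*} [Semiring R] [Group G] [Fintype G]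
    (x y : MonoidAlgebra R G) (g : G) :
    (x * y).coeff g = ∑ h : G, x.coeff h * y.coeff (h⁻¹ * g) := by
  rw [coeff_mul_apply_left, Finsupp.sum_fintype _ _ (by simp)]

end MonoidAlgebra

section sigmaMat

variable {R G : Type*} [Semiring R] [Group G]

@[simp]
theorem sigmaMat_zero : sigmaMat (0 : MonoidAlgebra R G) = 0 := by
  ext i j
  simp [sigmaMat]

theorem sigmaMat_mul [Fintype G] (u w : MonoidAlgebra R G) :
    sigmaMat (u * w) = sigmaMat u * sigmaMat w := by
  ext i j
  simp only [sigmaMat, of_apply, mul_apply, MonoidAlgebra.coeff_mul_eq_sum]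
  rw [← Equiv.sum_comp (Equiv.mulLeft i) fun k => u.coeff (i⁻¹ * k) * w.coeff (k⁻¹ * j)]
  simp [mul_assoc]

theorem sigmaMat_transInvol (v : MonoidAlgebra R G) :
    sigmaMat (transInvol v) = (sigmaMat v)ᵀ := by
  ext i j
  simp [sigmaMat, transInvol]

end sigmaMat

theorem stmt_4_general (R G : Type*) [CommRing R] [Group G] [Fintype G]
    (v : MonoidAlgebra R G) (hvT : transInvol v = v) (hv2 : v * v = 0) :
    ∀ x ∈ Submodule.span R (Set.range fun i => sigmaMat v i),
      ∀ y ∈ Submodule.span R (Set.range fun i => sigmaMat v i),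
        ∑ k : G, x k * y k = 0 := by
  have h_rows : sigmaMat v * (sigmaMat v)ᵀ = 0 := by
    rw [← sigmaMat_transInvol, hvT, ← sigmaMat_mul, hv2, sigmaMat_zero]
  intro x hx y hy
  exact dotProduct_eq_zero_of_mem_span_row h_rows hx hy

/-- If v = vᵀ and v² = 0 then the row space of σ(v) is self-orthogonal. -/
theorem stmt_4 (R G : Type*) [CommRing R] [Fintype R] [Group G] [Fintype G]
    (v : MonoidAlgebra R G) (hvT : transInvol v = v) (hv2 : v * v = 0) :
    ∀ x ∈ Submodule.span R (Set.range fun i => sigmaMat v i),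
      ∀ y ∈ Submodule.span R (Set.range fun i => sigmaMat v i),
        ∑ k : G, x k * y k = 0 :=
  stmt_4_general R G v hvT hv2
end

section
/- Let C be a linear code of length n over RG identified with R^n, formed as the row space of σ(v) for some v ∈ RG, and let Ψ: RG → R^n be the canonical coordinate map. Then Ψ^{-1}(C^⊥) is a left ideal of RG. -/
/-- The Euclidean dual of a linear code C ⊆ R^ι. -/
noncomputable def dualCode {R ι : Type*} [CommRing R] [Fintype ι] (C : Submodule R (ι → R)) :
    Submodule R (ι → R) where
  carrier := {x | ∀ c ∈ C, ∑ i, x i * c i = 0}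
  add_mem' := by
    intro a b ha hb c hc
    have h1 := ha c hc
    have h2 := hb c hc
    simp only [Pi.add_apply, add_mul, Finset.sum_add_distrib, h1, h2, add_zero]
  zero_mem' := by intro c hc; simp
  smul_mem' := by
    intro r x hx c hc
    have h := hx c hc
    simp only [Pi.smul_apply, smul_eq_mul, mul_assoc]
    rw [← Finset.mul_sum, h, mul_zero]

/-!
Summing over `g` and reindexing, `∑_g w_g v_{i⁻¹ g}` is the coefficient of `i` in `w * v̄`, where
`v̄ = transInvol v`. Hence `Ψ(w)` is orthogonal to every row of `σ(v)`, equivalently to the code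
they span, exactly when `w * v̄ = 0`, and the left annihilator of `v̄` is a left ideal.
-/

open MonoidAlgebra

theorem mem_dualCode_span_iff {R ι : Type*} [CommRing R] [Fintype ι] (s : Set (ι → R))
    (x : ι → R) : x ∈ dualCode (Submodule.span R s) ↔ ∀ c ∈ s, ∑ i, x i * c i = 0 := by
  refine ⟨fun hx c hc => hx c (Submodule.subset_span hc), fun hs c hc => ?_⟩
  induction hc using Submodule.span_induction with
  | mem c hc => exact hs c hc
  | zero => simp
  | add c d _ _ hc hd => simp only [Pi.add_apply, mul_add, Finset.sum_add_distrib, hc, hd, add_zero]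
  | smul t c _ hc =>
    simp only [Pi.smul_apply, smul_eq_mul, mul_left_comm, ← Finset.mul_sum, hc, mul_zero]

section GroupRing

variable {R G : Type*} [CommRing R] [Group G] [Fintype G]

theorem coeff_mul_transInvol (w v : MonoidAlgebra R G) (i : G) :
    (w * transInvol v).coeff i = ∑ g, w.coeff g * v.coeff (i⁻¹ * g) := by
  rw [coeff_mul_apply_left, Finsupp.sum_fintype _ _ fun _ => zero_mul _]
  simp [transInvol, coeff_ofCoeff]

theorem mem_dualCode_sigmaMat_iff (v w : MonoidAlgebra R G) :
    (fun g => w.coeff g) ∈ dualCode (Submodule.span R (Set.range fun i => sigmaMat v i)) ↔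
      w * transInvol v = 0 := by
  rw [mem_dualCode_span_iff, Set.forall_mem_range, ← coeff_inj, coeff_zero, Finsupp.ext_iff]
  simp [coeff_mul_transInvol, sigmaMat]

end GroupRing

theorem stmt_13_general (R G : Type*) [CommRing R] [Group G] [Fintype G]
    (v : MonoidAlgebra R G) :
    let C := Submodule.span R (Set.range fun i => sigmaMat v i)
    let S := {w : MonoidAlgebra R G | (fun g => w.coeff g) ∈ dualCode C}
    (0 : MonoidAlgebra R G) ∈ S ∧
      (∀ a ∈ S, ∀ b ∈ S, a + b ∈ S) ∧
      (∀ r : MonoidAlgebra R G, ∀ a ∈ S, r * a ∈ S) := by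
  intro C S
  have mem_S : ∀ w, w ∈ S ↔ w * transInvol v = 0 := mem_dualCode_sigmaMat_iff v
  simp only [mem_S]
  refine ⟨zero_mul _, fun a ha b hb => by rw [add_mul, ha, hb, add_zero],
    fun r a ha => by rw [mul_assoc, ha, mul_zero]⟩

/-- The preimage Ψ⁻¹(C^⊥) of the dual of the code C = C(v) under the coordinate map
    is a left ideal of RG. -/
theorem stmt_13 (R G : Type*) [CommRing R] [Fintype R] [Group G] [Fintype G]
    (v : MonoidAlgebra R G) :
    let C := Submodule.span R (Set.range fun i => sigmaMat v i)
    let S := {w : MonoidAlgebra R G | (fun g => w.coeff g) ∈ dualCode C}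
    (0 : MonoidAlgebra R G) ∈ S ∧
      (∀ a ∈ S, ∀ b ∈ S, a + b ∈ S) ∧
      (∀ r : MonoidAlgebra R G, ∀ a ∈ S, r * a ∈ S) :=
  stmt_13_general R G v
end

section
/- The Gray map φ_1 from R_1 = F_2[u]/(u²) to F_2², defined by φ_1(a + bu) = (b, a+b), is an F_2-linear bijection, and if C ⊆ R_1^n is a self-dual code then φ_1(C) ⊆ F_2^{2n} is a binary self-dual code. -/
/-- The Gray map φ₁ : F₂ + uF₂ → F₂², a + bu ↦ (b, a + b). -/
noncomputable def phi1 : DualNumber (ZMod 2) → (Fin 2 → ZMod 2) :=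
  fun x => ![x.snd, x.fst + x.snd]

/-- Explicit inverse of the Gray map. -/
noncomputable def psi1 : (Fin 2 → ZMod 2) → DualNumber (ZMod 2) :=
  fun v => (⟨v 1 + v 0, v 0⟩ : ZMod 2 × ZMod 2)

lemma two_eq_zero' (a : ZMod 2) : a + a = 0 := by
  have : (2 : ZMod 2) = 0 := by decide
  calc a + a = 2 * a := by ring
  _ = 0 := by rw [this, zero_mul]

lemma psi1_phi1 : Function.LeftInverse psi1 phi1 := by
  intro x
  obtain ⟨a, b⟩ := x
  refine Prod.ext ?_ ?_ <;> simp [psi1, phi1, TrivSqZeroExt.fst, TrivSqZeroExt.snd]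
  linear_combination two_eq_zero' b

lemma phi1_psi1 : Function.RightInverse psi1 phi1 := by
  intro v
  funext j
  fin_cases j <;>
    simp [psi1, phi1, TrivSqZeroExt.fst, TrivSqZeroExt.snd]
  rw [add_assoc, two_eq_zero' (v 0), add_zero]

lemma phi1_add (a b : DualNumber (ZMod 2)) : phi1 (a + b) = phi1 a + phi1 b := by
  funext j
  fin_cases j <;> simp [phi1] <;> ring

lemma phi1_inner (x y : DualNumber (ZMod 2)) :
    ∑ j : Fin 2, phi1 x j * phi1 y j = (x * y).fst + (x * y).snd := by
  rw [Fin.sum_univ_two]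
  simp only [phi1, TrivSqZeroExt.fst_mul, TrivSqZeroExt.snd_mul, Matrix.cons_val_zero,
    Matrix.cons_val_one, Matrix.head_cons, smul_eq_mul, MulOpposite.smul_eq_mul_unop,
    MulOpposite.unop_op]
  set a := x.fst; set b := x.snd; set c := y.fst; set d := y.snd
  have h2 : b * d + b * d = 0 := two_eq_zero' _
  ring_nf
  ring_nf at h2 ⊢
  linear_combination h2

/-- φ₁ is an F₂-linear bijection, and if C ⊆ R₁ⁿ is a self-dual code then its coordinatewise
    Gray image in F₂^{2n} is a binary self-dual code. -/
theorem stmt_16 :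
    Function.Bijective phi1 ∧
      (∀ a b : DualNumber (ZMod 2), phi1 (a + b) = phi1 a + phi1 b) ∧
      (∀ (n : ℕ) (C : Submodule (DualNumber (ZMod 2)) (Fin n → DualNumber (ZMod 2))),
        C = dualCode C →
          ∀ y : Fin n × Fin 2 → ZMod 2,
            (y ∈ (fun (x : Fin n → DualNumber (ZMod 2)) (p : Fin n × Fin 2) =>
                  phi1 (x p.1) p.2) '' (C : Set (Fin n → DualNumber (ZMod 2))))
              ↔ ∀ d ∈ (fun (x : Fin n → DualNumber (ZMod 2)) (p : Fin n × Fin 2) =>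
                  phi1 (x p.1) p.2) '' (C : Set (Fin n → DualNumber (ZMod 2))),
                  ∑ p : Fin n × Fin 2, y p * d p = 0) := by
  have hbij : Function.Bijective phi1 := ⟨psi1_phi1.injective, phi1_psi1.surjective⟩
  refine ⟨hbij, phi1_add, ?_⟩
  intro n C hC y
  -- key sum identity
  have key : ∀ x c : Fin n → DualNumber (ZMod 2),
      ∑ p : Fin n × Fin 2, phi1 (x p.1) p.2 * phi1 (c p.1) p.2
        = (∑ i, x i * c i).fst + (∑ i, x i * c i).snd := by
    intro x c
    rw [Fintype.sum_prod_type, TrivSqZeroExt.fst_sum, TrivSqZeroExt.snd_sum,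
      ← Finset.sum_add_distrib]
    exact Finset.sum_congr rfl fun i _ => phi1_inner (x i) (c i)
  constructor
  · rintro ⟨x, hx, rfl⟩ d ⟨c, hc, rfl⟩
    have hx' : x ∈ dualCode C := hC ▸ hx
    have : ∑ i, x i * c i = 0 := hx' c hc
    rw [key, this]
    simp
  · intro h
    set x : Fin n → DualNumber (ZMod 2) := fun i => psi1 (fun j => y (i, j)) with hx
    have hyx : (fun p : Fin n × Fin 2 => phi1 (x p.1) p.2) = y := by
      funext p
      have := phi1_psi1 (fun j => y (p.1, j))
      calc phi1 (x p.1) p.2 = (fun j => y (p.1, j)) p.2 := by rw [hx]; rw [this]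
      _ = y p := rfl
    refine ⟨x, ?_, hyx⟩
    rw [hC]
    intro c hc
    set S := ∑ i, x i * c i with hS
    have h1 : S.fst + S.snd = 0 := by
      have := h _ ⟨c, hc, rfl⟩
      rw [← hyx, key] at this
      exact this
    have h2 : S.fst = 0 := by
      set u : DualNumber (ZMod 2) := TrivSqZeroExt.inr 1 with hu
      have hc2 : u • c ∈ C := C.smul_mem u hc
      have := h _ ⟨_, hc2, rfl⟩
      rw [← hyx, key] at this
      have hsum : ∑ i, x i * (u • c) i = u * S := by
        rw [hS, Finset.mul_sum]
        refine Finset.sum_congr rfl fun i _ => ?_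
        simp [Pi.smul_apply, smul_eq_mul]
        ring
      rw [hsum] at this
      simpa [hu, TrivSqZeroExt.fst_mul, TrivSqZeroExt.snd_mul, TrivSqZeroExt.fst_inr,
        TrivSqZeroExt.snd_inr] using this
    refine TrivSqZeroExt.ext h2 ?_
    rw [h2, zero_add] at h1
    exact h1
end
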